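/- arXiv:0811.4285 — 2 statements merged into one kernel-verified Lean document; each statement's English description precedes it below -/
import Mathlib

section
/- Let S be a cutset separating x₀ from ∞ in a countable directed graph, minimal for inclusion, and let K be the set of vertices reachable from x₀ by directed paths using only edges not in S. Then S = ∂_E K, where ∂_E K = {e ∈ E : tail(e) ∈ K, head(e) ∉ K}, and K is a connected subset containing x₀. -/
section

variable {V E : Type*} (tail head : E → V)

/-- A cutset separating `x₀` from infinity: every infinite directed simple path
started at `x₀` uses an edge of `S`. -/
def IsCutset (x₀ : V) (S : Set E) : Prop :=
  ∀ γ : ℕ → E, tail (γ 0) = x₀ → (∀ n, head (γ n) = tail (γ (n + 1))) →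
    Function.Injective (fun n => tail (γ n)) → ∃ n, γ n ∈ S

/-- From reachability we extract a simple (vertex-injective) path. -/
lemma exists_simple_path {x₀ y : V} {S : Set E}
    (h : Relation.ReflTransGen
      (fun a b => ∃ e', e' ∉ S ∧ tail e' = a ∧ head e' = b) x₀ y) :
    ∃ (k : ℕ) (f : ℕ → V), f 0 = x₀ ∧ f k = y ∧
      (∀ i < k, ∃ e, e ∉ S ∧ tail e = f i ∧ head e = f (i + 1)) ∧
      Set.InjOn f (Set.Iic k) := by
  obtain ⟨k, f, h0, hk, hstep⟩ : ∃ (k : ℕ) (f : ℕ → V), f 0 = x₀ ∧ f k = y ∧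
      (∀ i < k, ∃ e, e ∉ S ∧ tail e = f i ∧ head e = f (i + 1)) := by
    induction h with
    | refl => exact ⟨0, fun _ => x₀, rfl, rfl, fun i hi => absurd hi (by omega)⟩
    | @tail b c hab hbc ih =>
      obtain ⟨k, f, h0, hk, hstep⟩ := ih
      refine ⟨k + 1, fun i => if i ≤ k then f i else c, by simp [h0], by simp, ?_⟩
      intro i hi
      rcases lt_or_eq_of_le (Nat.lt_succ_iff.mp hi) with hik | hik
      · obtain ⟨e, he⟩ := hstep i hik
        exact ⟨e, by simp [hik.le, Nat.succ_le_of_lt hik, he.1, he.2.1, he.2.2]⟩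
      · obtain ⟨e, he1, he2, he3⟩ := hbc
        subst hik
        exact ⟨e, he1, by simp [he2, hk], by simp [he3]⟩
  clear h
  induction k using Nat.strong_induction_on generalizing f with
  | _ k ih =>
    by_cases hinj : Set.InjOn f (Set.Iic k)
    · exact ⟨k, f, h0, hk, hstep, hinj⟩
    · rw [Set.InjOn] at hinj
      push_neg at hinj
      obtain ⟨a', ha', b', hb', hfab', hab'⟩ := hinj
      simp only [Set.mem_Iic] at ha' hb'
      -- wlog a < b
      obtain ⟨a, b, ha, hb, hlt, hfab⟩ : ∃ a b, a ≤ k ∧ b ≤ k ∧ a < b ∧ f a = f b := by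
        rcases hab'.lt_or_gt with h | h
        · exact ⟨a', b', ha', hb', h, hfab'⟩
        · exact ⟨b', a', hb', ha', h, hfab'.symm⟩
      set d := b - a with hd
      have hd1 : 1 ≤ d := by omega
      refine ih (k - d) (by omega) (fun m => if m ≤ a then f m else f (m + d))
        (by show (if 0 ≤ a then f 0 else f (0 + d)) = x₀
            rw [if_pos (Nat.zero_le a), h0]) ?_ ?_
      · by_cases hc : k - d ≤ a
        · have hba : b = k := by omega
          have hka : k - d = a := by omega
          show (if k - d ≤ a then f (k - d) else f (k - d + d)) = y
          rw [if_pos hc, hka, hfab, hba, hk]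
        · show (if k - d ≤ a then f (k - d) else f (k - d + d)) = y
          have hkd : k - d + d = k := by omega
          rw [if_neg hc, hkd, hk]
      · intro m hm
        show ∃ e, e ∉ S ∧ tail e = (if m ≤ a then f m else f (m + d)) ∧
          head e = (if m + 1 ≤ a then f (m + 1) else f (m + 1 + d))
        by_cases h1 : m + 1 ≤ a
        · obtain ⟨e, he1, he2, he3⟩ := hstep m (by omega)
          exact ⟨e, he1, by rw [if_pos (Nat.le_of_succ_le h1), he2],
            by rw [if_pos h1, he3]⟩
        · by_cases h2 : m ≤ a
          · have hma : m = a := by omega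
            obtain ⟨e, he1, he2, he3⟩ := hstep b (by omega)
            refine ⟨e, he1, ?_, ?_⟩
            · rw [if_pos h2, he2, hma, hfab]
            · have hbd : m + 1 + d = b + 1 := by omega
              rw [if_neg h1, hbd, he3]
          · obtain ⟨e, he1, he2, he3⟩ := hstep (m + d) (by omega)
            refine ⟨e, he1, ?_, ?_⟩
            · rw [if_neg h2, he2]
            · have hbd : m + 1 + d = m + d + 1 := by omega
              rw [if_neg h1, hbd, he3]

/-- let `S` be a cutset minimal for inclusion and `K` the set of
vertices reachable from `x₀` by directed paths avoiding `S`.  Then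
`S = ∂_E K = {e : tail e ∈ K, head e ∉ K}`, and `K` is connected and contains
`x₀`. -/
theorem minimal_cutset_eq_boundary (x₀ : V) (S : Set E)
    (hS : IsCutset tail head x₀ S)
    (hmin : ∀ S' : Set E, S' ⊆ S → S' ≠ S → ¬ IsCutset tail head x₀ S')
    (hpath : ∃ γ : ℕ → E, tail (γ 0) = x₀ ∧ (∀ n, head (γ n) = tail (γ (n + 1))) ∧
      Function.Injective (fun n => tail (γ n))) :
    S = {e : E | tail e ∈
          {y : V | Relation.ReflTransGen
            (fun a b => ∃ e', e' ∉ S ∧ tail e' = a ∧ head e' = b) x₀ y} ∧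
        head e ∉
          {y : V | Relation.ReflTransGen
            (fun a b => ∃ e', e' ∉ S ∧ tail e' = a ∧ head e' = b) x₀ y}} ∧
    x₀ ∈ {y : V | Relation.ReflTransGen
            (fun a b => ∃ e', e' ∉ S ∧ tail e' = a ∧ head e' = b) x₀ y} ∧
    (∀ y ∈ {y : V | Relation.ReflTransGen
            (fun a b => ∃ e', e' ∉ S ∧ tail e' = a ∧ head e' = b) x₀ y},
      Relation.ReflTransGen
        (fun a b =>
          a ∈ {y : V | Relation.ReflTransGen
                (fun a' b' => ∃ e', e' ∉ S ∧ tail e' = a' ∧ head e' = b') x₀ y} ∧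
          b ∈ {y : V | Relation.ReflTransGen
                (fun a' b' => ∃ e', e' ∉ S ∧ tail e' = a' ∧ head e' = b') x₀ y} ∧
          ∃ e, tail e = a ∧ head e = b) x₀ y) := by
  refine ⟨?_, Relation.ReflTransGen.refl, ?_⟩
  · -- S = boundary
    apply Set.eq_of_subset_of_subset
    · intro s hsS
      simp only [Set.mem_setOf_eq]
      -- the path avoiding S \ {s}
      have hne : S \ {s} ≠ S := by
        intro h
        have : s ∈ S \ {s} := by rw [h]; exact hsS
        exact this.2 rfl
      have hns := hmin (S \ {s}) Set.diff_subset hne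
      rw [IsCutset] at hns
      push_neg at hns
      obtain ⟨γ, h0, hchain, hinj, havoid⟩ := hns
      have heq : ∀ m, γ m ∈ S → γ m = s := by
        intro m hm
        have := havoid m
        simp only [Set.mem_diff, Set.mem_singleton_iff, not_and, not_not] at this
        exact this hm
      obtain ⟨n, hn⟩ := hS γ h0 hchain hinj
      have hγn : γ n = s := heq n hn
      have huniq : ∀ m, γ m ∈ S → m = n := by
        intro m hm
        apply hinj
        show tail (γ m) = tail (γ n)
        rw [heq m hm, hγn]
      have hK : ∀ m, m ≤ n → Relation.ReflTransGen
          (fun a b => ∃ e', e' ∉ S ∧ tail e' = a ∧ head e' = b) x₀ (tail (γ m)) := by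
        intro m
        induction m with
        | zero => intro _; rw [h0]
        | succ m ih =>
          intro hm
          have h1 : γ m ∉ S := fun hc => by have := huniq m hc; omega
          exact (ih (by omega)).tail ⟨γ m, h1, rfl, hchain m⟩
      constructor
      · have := hK n le_rfl
        rwa [hγn] at this
      · -- head s ∉ K
        intro hhead
        obtain ⟨k, f, hf0, hfk, hfstep, hfinj⟩ := exists_simple_path tail head hhead
        set γ' : ℕ → E := fun m => γ (n + 1 + m) with hγ'
        have hγ't0 : tail (γ' 0) = head s := by
          show tail (γ (n + 1 + 0)) = head s
          rw [← hγn, ← hchain n]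
        have hγ'avoid : ∀ m, γ' m ∉ S := by
          intro m hc
          have := huniq (n + 1 + m) hc
          omega
        have hγ'inj : ∀ a b, tail (γ' a) = tail (γ' b) → a = b := by
          intro a b hab
          have := hinj (show (fun n => tail (γ n)) (n + 1 + a)
            = (fun n => tail (γ n)) (n + 1 + b) from hab)
          omega
        have hγ'chain : ∀ m, head (γ' m) = tail (γ' (m + 1)) := by
          intro m
          show head (γ (n + 1 + m)) = tail (γ (n + 1 + (m + 1)))
          have : n + 1 + (m + 1) = (n + 1 + m) + 1 := by omega
          rw [this, hchain]
        -- the set of indices where γ' meets the prefix path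
        set M : Set ℕ := {m | ∃ i ≤ k, tail (γ' m) = f i} with hM
        have hM0 : 0 ∈ M := ⟨k, le_rfl, by rw [hγ't0, hfk]⟩
        have hMfin : M.Finite := by
          apply Set.Finite.subset
            (Set.Finite.preimage (f := fun m => tail (γ' m))
              (Set.injOn_of_injective (fun a b => hγ'inj a b))
              ((Set.finite_Iic k).image f))
          rintro m ⟨i, hik, hfi⟩
          exact ⟨i, hik, hfi.symm⟩
        obtain ⟨m₀, hm₀M, hm₀max⟩ : ∃ m₀ ∈ M, ∀ m ∈ M, m ≤ m₀ := by
          have hne' : hMfin.toFinset.Nonempty := ⟨0, hMfin.mem_toFinset.mpr hM0⟩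
          refine ⟨hMfin.toFinset.max' hne', hMfin.mem_toFinset.mp (hMfin.toFinset.max'_mem hne'), ?_⟩
          intro m hm
          exact hMfin.toFinset.le_max' m (hMfin.mem_toFinset.mpr hm)
        obtain ⟨i, hik, hi⟩ := hm₀M
        -- choose the prefix edges
        have hgE : ∀ j, ∃ e, j < k → (e ∉ S ∧ tail e = f j ∧ head e = f (j + 1)) := by
          intro j
          by_cases h : j < k
          · obtain ⟨e, he⟩ := hfstep j h
            exact ⟨e, fun _ => he⟩
          · exact ⟨γ 0, fun h' => absurd h' h⟩
        choose g hg using hgE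
        set δ : ℕ → E := fun j => if j < i then g j else γ' (m₀ + (j - i)) with hδ
        have hδt : ∀ j, tail (δ j) = if j ≤ i then f j else tail (γ' (m₀ + (j - i))) := by
          intro j
          show tail (if j < i then g j else γ' (m₀ + (j - i))) = _
          rcases lt_trichotomy j i with h | h | h
          · rw [if_pos h, if_pos h.le]
            exact (hg j (lt_of_lt_of_le h hik)).2.1
          · subst h
            rw [if_neg (lt_irrefl j), if_pos le_rfl, Nat.sub_self, Nat.add_zero]
            exact hi
          · rw [if_neg (not_lt_of_gt h), if_neg (not_le_of_gt h)]
        have hδ0 : tail (δ 0) = x₀ := by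
          rw [hδt 0, if_pos (Nat.zero_le i), hf0]
        have hδchain : ∀ j, head (δ j) = tail (δ (j + 1)) := by
          intro j
          rcases lt_or_ge j i with h | h
          · have hj : head (δ j) = f (j + 1) := by
              show head (if j < i then g j else γ' (m₀ + (j - i))) = f (j + 1)
              rw [if_pos h]
              exact (hg j (lt_of_lt_of_le h hik)).2.2
            rw [hj, hδt (j + 1), if_pos (Nat.succ_le_of_lt h)]
          · have h1 : ¬ j < i := not_lt_of_ge h
            have h2 : ¬ j + 1 ≤ i := by omega
            show head (if j < i then g j else γ' (m₀ + (j - i))) = _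
            rw [if_neg h1, hδt (j + 1), if_neg h2]
            have : j + 1 - i = (j - i) + 1 := by omega
            rw [this, ← Nat.add_assoc]
            exact hγ'chain (m₀ + (j - i))
        have hδinj : Function.Injective (fun j => tail (δ j)) := by
          intro a b hab
          simp only at hab
          rw [hδt a, hδt b] at hab
          by_cases ha : a ≤ i <;> by_cases hb : b ≤ i
          · rw [if_pos ha, if_pos hb] at hab
            exact hfinj (Set.mem_Iic.mpr (ha.trans hik)) (Set.mem_Iic.mpr (hb.trans hik)) hab
          · rw [if_pos ha, if_neg hb] at hab
            have hmem : m₀ + (b - i) ∈ M := ⟨a, ha.trans hik, hab.symm⟩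
            have := hm₀max _ hmem
            omega
          · rw [if_neg ha, if_pos hb] at hab
            have hmem : m₀ + (a - i) ∈ M := ⟨b, hb.trans hik, hab⟩
            have := hm₀max _ hmem
            omega
          · rw [if_neg ha, if_neg hb] at hab
            have := hγ'inj _ _ hab
            omega
        obtain ⟨n', hn'⟩ := hS δ hδ0 hδchain hδinj
        have hn'' : (if n' < i then g n' else γ' (m₀ + (n' - i))) ∈ S := hn'
        rcases lt_or_ge n' i with h | h
        · rw [if_pos h] at hn''
          exact (hg n' (lt_of_lt_of_le h hik)).1 hn''
        · rw [if_neg (not_lt_of_ge h)] at hn''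
          exact hγ'avoid (m₀ + (n' - i)) hn''
    · -- boundary ⊆ S
      rintro e ⟨hte, hhe⟩
      by_contra heS
      exact hhe (hte.tail ⟨e, heS, rfl, rfl⟩)
  · -- connectivity
    intro y hy
    induction hy with
    | refl => exact Relation.ReflTransGen.refl
    | @tail b c hab hbc ih =>
      obtain ⟨e, he1, he2, he3⟩ := hbc
      exact ih.tail ⟨hab, hab.tail ⟨e, he1, he2, he3⟩, e, he2, he3⟩

end
end

section
/- On ℤ^d, with weights α_{e_1},…,α_{e_d}, α_{−e_1},…,α_{−e_d} > 0 on the 2d directed unit edges (translation invariant), the minimum of α(∂_E K) over all finite connected subsets K ⊆ ℤ^d containing 0 with K ≠ {0} equals min_{i₀=1,…,d} [ 2(Σ_{i≠i₀} (α_{e_i}+α_{−e_i})) + α_{e_{i₀}} + α_{−e_{i₀}} ] = 2 Σ_{j} α_{e_j} − max_i (α_{e_i} + α_{−e_i}), and it is attained by K = {0, e_{i₀}} for the minimizing i₀. -/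
/-- The weighted boundary sum `α(∂_E K)` of a finite subset `K ⊆ ℤ^d`, with weight
`α i` on edges in direction `+e_i` and `β i` on edges in direction `−e_i`. -/
noncomputable def boundarySum (d : ℕ) (α β : Fin d → ℝ) (K : Finset (Fin d → ℤ)) : ℝ :=
  ∑ x ∈ K, ∑ i : Fin d,
    ((if x + Pi.single i 1 ∉ K then α i else 0) + (if x - Pi.single i 1 ∉ K then β i else 0))

/-- Nearest-neighbor adjacency on `ℤ^d`. -/
def zdAdj (d : ℕ) (x y : Fin d → ℤ) : Prop :=
  ∃ i : Fin d, y = x + Pi.single i 1 ∨ y = x - Pi.single i 1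

lemma single_ne_zero' {d : ℕ} (i : Fin d) : (Pi.single i 1 : Fin d → ℤ) ≠ 0 := by
  intro h; have := congrFun h i; simp at this

lemma single_inj' {d : ℕ} {i j : Fin d} (h : (Pi.single i 1 : Fin d → ℤ) = Pi.single j 1) :
    i = j := by
  by_contra hne
  have := congrFun h i
  rw [Pi.single_eq_same, Pi.single_eq_of_ne (fun hh => hne hh)] at this
  exact one_ne_zero this

lemma proj_add {d : ℕ} (x : Fin d → ℤ) (i : Fin d) :
    Function.update (x + Pi.single i 1) i 0 = Function.update x i 0 := by
  funext j
  by_cases h : j = i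
  · subst h; simp
  · simp [Function.update_of_ne h, Pi.single_eq_of_ne h]

lemma proj_sub {d : ℕ} (x : Fin d → ℤ) (i : Fin d) :
    Function.update (x - Pi.single i 1) i 0 = Function.update x i 0 := by
  funext j
  by_cases h : j = i
  · subst h; simp
  · simp [Function.update_of_ne h, Pi.single_eq_of_ne h]

lemma colA {d : ℕ} (K : Finset (Fin d → ℤ)) (i : Fin d) (c : ℝ) (hc : 0 ≤ c) :
    c * ((K.image (fun x => Function.update x i 0)).card : ℝ)
      ≤ ∑ x ∈ K, (if x + Pi.single i 1 ∉ K then c else 0) := by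
  set f : (Fin d → ℤ) → (Fin d → ℤ) := fun x => Function.update x i 0 with hf
  set T := K.filter (fun x => x + Pi.single i 1 ∉ K) with hT
  have hsum : ∑ x ∈ K, (if x + Pi.single i 1 ∉ K then c else 0) = (T.card : ℝ) * c := by
    rw [← Finset.sum_filter, Finset.sum_const, nsmul_eq_mul]
  have hsurj : Set.SurjOn f T (K.image f) := by
    intro p hp
    simp only [Finset.coe_image, Set.mem_image, Finset.mem_coe] at hp
    obtain ⟨y, hy, hyp⟩ := hp
    set F := K.filter (fun x => f x = p) with hF
    have hFne : F.Nonempty := ⟨y, Finset.mem_filter.2 ⟨hy, hyp⟩⟩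
    obtain ⟨x, hxF, hx⟩ := F.exists_max_image (fun x => x i) hFne
    obtain ⟨hxK, hxp⟩ := Finset.mem_filter.1 hxF
    refine ⟨x, ?_, hxp⟩
    simp only [Finset.mem_coe, hT, Finset.mem_filter]
    refine ⟨hxK, fun hmem => ?_⟩
    have hmemF : x + Pi.single i 1 ∈ F := by
      refine Finset.mem_filter.2 ⟨hmem, ?_⟩
      show f (x + Pi.single i 1) = p
      rw [hf]; simpa [proj_add] using hxp
    have := hx _ hmemF
    simp only [Pi.add_apply, Pi.single_eq_same] at this
    omega
  have hcard : (K.image f).card ≤ T.card := Finset.card_le_card_of_surjOn f hsurj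
  rw [hsum]
  calc c * ((K.image f).card : ℝ) ≤ c * (T.card : ℝ) := by
        exact mul_le_mul_of_nonneg_left (by exact_mod_cast hcard) hc
    _ = (T.card : ℝ) * c := mul_comm _ _

lemma colB {d : ℕ} (K : Finset (Fin d → ℤ)) (i : Fin d) (c : ℝ) (hc : 0 ≤ c) :
    c * ((K.image (fun x => Function.update x i 0)).card : ℝ)
      ≤ ∑ x ∈ K, (if x - Pi.single i 1 ∉ K then c else 0) := by
  set f : (Fin d → ℤ) → (Fin d → ℤ) := fun x => Function.update x i 0 with hf
  set T := K.filter (fun x => x - Pi.single i 1 ∉ K) with hT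
  have hsum : ∑ x ∈ K, (if x - Pi.single i 1 ∉ K then c else 0) = (T.card : ℝ) * c := by
    rw [← Finset.sum_filter, Finset.sum_const, nsmul_eq_mul]
  have hsurj : Set.SurjOn f T (K.image f) := by
    intro p hp
    simp only [Finset.coe_image, Set.mem_image, Finset.mem_coe] at hp
    obtain ⟨y, hy, hyp⟩ := hp
    set F := K.filter (fun x => f x = p) with hF
    have hFne : F.Nonempty := ⟨y, Finset.mem_filter.2 ⟨hy, hyp⟩⟩
    obtain ⟨x, hxF, hx⟩ := F.exists_min_image (fun x => x i) hFne
    obtain ⟨hxK, hxp⟩ := Finset.mem_filter.1 hxF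
    refine ⟨x, ?_, hxp⟩
    simp only [Finset.mem_coe, hT, Finset.mem_filter]
    refine ⟨hxK, fun hmem => ?_⟩
    have hmemF : x - Pi.single i 1 ∈ F := by
      refine Finset.mem_filter.2 ⟨hmem, ?_⟩
      show f (x - Pi.single i 1) = p
      rw [hf]; simpa [proj_sub] using hxp
    have := hx _ hmemF
    simp only [Pi.sub_apply, Pi.single_eq_same] at this
    omega
  have hcard : (K.image f).card ≤ T.card := Finset.card_le_card_of_surjOn f hsurj
  rw [hsum]
  calc c * ((K.image f).card : ℝ) ≤ c * (T.card : ℝ) := by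
        exact mul_le_mul_of_nonneg_left (by exact_mod_cast hcard) hc
    _ = (T.card : ℝ) * c := mul_comm _ _

lemma lower_bd {d : ℕ} (hd : 0 < d) (α β : Fin d → ℝ)
    (hα : ∀ i, 0 < α i) (hβ : ∀ i, 0 < β i) (K : Finset (Fin d → ℤ))
    (h0 : (0 : Fin d → ℤ) ∈ K) (hne : K ≠ {0}) :
    2 * (∑ i, (α i + β i))
        - Finset.univ.sup' ⟨⟨0, hd⟩, Finset.mem_univ _⟩ (fun i => α i + β i)
      ≤ boundarySum d α β K := by
  obtain ⟨y, hyK, hy0⟩ : ∃ y ∈ K, y ≠ 0 := by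
    by_contra h
    push_neg at h
    exact hne (Finset.eq_singleton_iff_unique_mem.2 ⟨h0, h⟩)
  obtain ⟨j, hj⟩ : ∃ j, y j ≠ 0 := by
    by_contra h
    push_neg at h
    exact hy0 (funext fun j => h j)
  set c : Fin d → ℕ := fun i => (K.image (fun x => Function.update x i 0)).card with hc
  have h1 : ∀ i, 1 ≤ c i := fun i =>
    Finset.card_pos.2 (Finset.Nonempty.image ⟨0, h0⟩ _)
  have h2 : ∀ i, i ≠ j → 2 ≤ c i := by
    intro i hij
    have : (1:ℕ) < c i := by
      rw [hc]
      refine Finset.one_lt_card.2 ⟨Function.update 0 i 0, ?_, Function.update y i 0, ?_, ?_⟩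
      · exact Finset.mem_image_of_mem _ h0
      · exact Finset.mem_image_of_mem _ hyK
      · intro h
        have := congrFun h j
        rw [Function.update_of_ne (Ne.symm hij), Function.update_of_ne (Ne.symm hij)] at this
        exact hj (this.symm)
    omega
  have hbd : boundarySum d α β K =
      ∑ i : Fin d, ((∑ x ∈ K, (if x + Pi.single i 1 ∉ K then α i else 0))
        + ∑ x ∈ K, (if x - Pi.single i 1 ∉ K then β i else 0)) := by
    rw [boundarySum, Finset.sum_comm]
    exact Finset.sum_congr rfl fun i _ => (Finset.sum_add_distrib)
  have step1 : ∀ i : Fin d, (α i + β i) * (c i : ℝ)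
      ≤ (∑ x ∈ K, (if x + Pi.single i 1 ∉ K then α i else 0))
        + ∑ x ∈ K, (if x - Pi.single i 1 ∉ K then β i else 0) := by
    intro i
    rw [add_mul]
    exact add_le_add (colA K i (α i) (hα i).le) (colB K i (β i) (hβ i).le)
  have step2 : ∀ i : Fin d,
      (α i + β i) * (if i = j then (1:ℝ) else 2) ≤ (α i + β i) * (c i : ℝ) := by
    intro i
    have hpos : (0:ℝ) ≤ α i + β i := by have := hα i; have := hβ i; linarith
    by_cases h : i = j
    · rw [if_pos h]
      apply mul_le_mul_of_nonneg_left _ hpos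
      exact_mod_cast h1 i
    · rw [if_neg h]
      apply mul_le_mul_of_nonneg_left _ hpos
      exact_mod_cast h2 i h
  have hsumg : ∑ i : Fin d, (α i + β i) * (if i = j then (1:ℝ) else 2)
      = 2 * (∑ i, (α i + β i)) - (α j + β j) := by
    have : ∀ i : Fin d, (α i + β i) * (if i = j then (1:ℝ) else 2)
        = 2 * (α i + β i) - (if i = j then (α i + β i) else 0) := by
      intro i; by_cases h : i = j <;> simp [h] <;> ring
    rw [Finset.sum_congr rfl fun i _ => this i, Finset.sum_sub_distrib,
      Finset.sum_ite_eq' Finset.univ j, ← Finset.mul_sum]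
    simp
  have hsup : α j + β j ≤ Finset.univ.sup' ⟨⟨0, hd⟩, Finset.mem_univ _⟩ (fun i => α i + β i) :=
    Finset.le_sup' (fun i => α i + β i) (Finset.mem_univ j)
  calc 2 * (∑ i, (α i + β i))
        - Finset.univ.sup' ⟨⟨0, hd⟩, Finset.mem_univ _⟩ (fun i => α i + β i)
      ≤ 2 * (∑ i, (α i + β i)) - (α j + β j) := by linarith
    _ = ∑ i : Fin d, (α i + β i) * (if i = j then (1:ℝ) else 2) := hsumg.symm
    _ ≤ ∑ i : Fin d, (α i + β i) * (c i : ℝ) := Finset.sum_le_sum fun i _ => step2 i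
    _ ≤ _ := by rw [hbd]; exact Finset.sum_le_sum fun i _ => step1 i

lemma value_eq {d : ℕ} (α β : Fin d → ℝ) (i₀ : Fin d) :
    boundarySum d α β {0, Pi.single i₀ 1}
      = 2 * (∑ i, (α i + β i)) - (α i₀ + β i₀) := by
  set e : Fin d → ℤ := Pi.single i₀ 1 with he
  set K : Finset (Fin d → ℤ) := {0, e} with hK
  have hmem : ∀ z : Fin d → ℤ, z ∈ K ↔ z = 0 ∨ z = e := by
    intro z; simp [hK]
  have h0e : (0 : Fin d → ℤ) ∉ ({e} : Finset (Fin d → ℤ)) := by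
    simp [he]
    exact fun h => single_ne_zero' i₀ h.symm
  have hA0 : ∀ i : Fin d, ((0 : Fin d → ℤ) + Pi.single i 1 ∉ K)
      ↔ i ≠ i₀ := by
    intro i
    rw [hmem]
    constructor
    · intro h hi
      exact h (Or.inr (by rw [hi, zero_add]))
    · rintro h (h1 | h2)
      · exact single_ne_zero' i (by rwa [zero_add] at h1)
      · rw [zero_add] at h2; exact h (single_inj' h2)
  have hB0 : ∀ i : Fin d, ((0 : Fin d → ℤ) - Pi.single i 1 ∉ K) := by
    intro i
    rw [hmem]
    rintro (h1 | h2)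
    · rw [zero_sub, neg_eq_zero] at h1; exact single_ne_zero' i h1
    · rw [zero_sub] at h2
      have h3 := congrFun h2 i
      simp only [Pi.neg_apply, he, Pi.single_eq_same] at h3
      by_cases hii : i = i₀
      · subst hii; rw [Pi.single_eq_same] at h3; omega
      · rw [Pi.single_eq_of_ne hii] at h3; omega
  have hAe : ∀ i : Fin d, (e + Pi.single i 1 ∉ K) := by
    intro i
    rw [hmem]
    rintro (h1 | h2)
    · have h3 := congrFun h1 i₀
      simp only [Pi.add_apply, he, Pi.single_eq_same, Pi.zero_apply] at h3
      by_cases hii : i = i₀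
      · subst hii; rw [Pi.single_eq_same] at h3; omega
      · rw [Pi.single_eq_of_ne (Ne.symm hii)] at h3; omega
    · exact single_ne_zero' i (add_eq_left.mp h2)
  have hBe : ∀ i : Fin d, (e - Pi.single i 1 ∉ K) ↔ i ≠ i₀ := by
    intro i
    rw [hmem]
    constructor
    · intro h hi
      exact h (Or.inl (by rw [hi, he, sub_self]))
    · rintro h (h1 | h2)
      · rw [sub_eq_zero] at h1
        exact h (single_inj' h1.symm)
      · have : (Pi.single i 1 : Fin d → ℤ) = 0 := by
          have := sub_eq_self.mp h2
          exact this
        exact single_ne_zero' i this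
  have hsum : boundarySum d α β K
      = (∑ i : Fin d, ((if i ≠ i₀ then α i else 0) + β i))
        + (∑ i : Fin d, (α i + (if i ≠ i₀ then β i else 0))) := by
    rw [boundarySum, hK, Finset.sum_insert h0e, Finset.sum_singleton]
    congr 1
    · refine Finset.sum_congr rfl fun i _ => ?_
      rw [if_pos (hB0 i)]
      congr 1
      by_cases h : i ≠ i₀
      · rw [if_pos ((hA0 i).2 h), if_pos h]
      · rw [if_neg (fun hh => h ((hA0 i).1 hh)), if_neg h]
    · refine Finset.sum_congr rfl fun i _ => ?_
      rw [if_pos (hAe i)]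
      congr 1
      by_cases h : i ≠ i₀
      · rw [if_pos ((hBe i).2 h), if_pos h]
      · rw [if_neg (fun hh => h ((hBe i).1 hh)), if_neg h]
  rw [hsum]
  have e1 : ∀ (γ : Fin d → ℝ), ∑ i : Fin d, (if i ≠ i₀ then γ i else 0)
      = (∑ i, γ i) - γ i₀ := by
    intro γ
    have : ∀ i : Fin d, (if i ≠ i₀ then γ i else 0)
        = γ i - (if i = i₀ then γ i else 0) := by
      intro i; by_cases h : i = i₀ <;> simp [h]
    rw [Finset.sum_congr rfl fun i _ => this i, Finset.sum_sub_distrib,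
      Finset.sum_ite_eq' Finset.univ i₀]
    simp
  rw [Finset.sum_add_distrib, Finset.sum_add_distrib, e1 α, e1 β]
  rw [Finset.sum_add_distrib]
  ring

/-- on `ℤ^d` with translation-invariant weights
`α i` on `+e_i` and `β i` on `−e_i`, the minimum of `α(∂_E K)` over finite connected
`K ∋ 0`, `K ≠ {0}`, equals `2 Σ_i (α_i + β_i) − max_i (α_i + β_i)`, which also
equals `min_{i₀} [2 Σ_{i ≠ i₀} (α_i + β_i) + α_{i₀} + β_{i₀}]`, and it is attained
by `K = {0, e_{i₀}}` for the minimizing `i₀`. -/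
theorem zd_min_boundary (d : ℕ) (hd : 0 < d) (α β : Fin d → ℝ)
    (hα : ∀ i, 0 < α i) (hβ : ∀ i, 0 < β i) :
    IsLeast {s : ℝ | ∃ K : Finset (Fin d → ℤ),
        (0 : Fin d → ℤ) ∈ K ∧ K ≠ {0} ∧
        (∀ x ∈ K, Relation.ReflTransGen
          (fun a b => a ∈ K ∧ b ∈ K ∧ zdAdj d a b) 0 x) ∧
        s = boundarySum d α β K}
      (2 * (∑ i, (α i + β i))
        - Finset.univ.sup' ⟨⟨0, hd⟩, Finset.mem_univ _⟩ (fun i => α i + β i)) ∧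
    (2 * (∑ i, (α i + β i))
        - Finset.univ.sup' ⟨⟨0, hd⟩, Finset.mem_univ _⟩ (fun i => α i + β i))
      = Finset.univ.inf' ⟨⟨0, hd⟩, Finset.mem_univ _⟩
          (fun i₀ => 2 * (∑ i ∈ Finset.univ.filter (fun i => i ≠ i₀), (α i + β i))
            + α i₀ + β i₀) ∧
    ∃ i₀ : Fin d,
      boundarySum d α β {0, Pi.single i₀ 1}
        = 2 * (∑ i, (α i + β i))
          - Finset.univ.sup' ⟨⟨0, hd⟩, Finset.mem_univ _⟩ (fun i => α i + β i) := by
  have hne : (Finset.univ : Finset (Fin d)).Nonempty := ⟨⟨0, hd⟩, Finset.mem_univ _⟩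
  obtain ⟨i₀, -, hi₀⟩ := Finset.exists_mem_eq_sup' hne (fun i => α i + β i)
  refine ⟨⟨⟨{0, Pi.single i₀ 1}, ?_, ?_, ?_, ?_⟩, ?_⟩, ?_, ⟨i₀, by rw [value_eq, hi₀]⟩⟩
  · exact Finset.mem_insert_self _ _
  · intro h
    have : (Pi.single i₀ 1 : Fin d → ℤ) ∈ ({0} : Finset (Fin d → ℤ)) := by
      rw [← h]; exact Finset.mem_insert_of_mem (Finset.mem_singleton_self _)
    rw [Finset.mem_singleton] at this
    exact single_ne_zero' i₀ this
  · intro x hx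
    rw [Finset.mem_insert, Finset.mem_singleton] at hx
    rcases hx with rfl | rfl
    · exact Relation.ReflTransGen.refl
    · refine Relation.ReflTransGen.single ⟨Finset.mem_insert_self _ _,
        Finset.mem_insert_of_mem (Finset.mem_singleton_self _), i₀, Or.inl ?_⟩
      rw [zero_add]
  · rw [value_eq, hi₀]
  · rintro s ⟨K, h0, hKne, -, rfl⟩
    exact lower_bd hd α β hα hβ K h0 hKne
  · have hfil : ∀ i₀' : Fin d,
        2 * (∑ i ∈ Finset.univ.filter (fun i => i ≠ i₀'), (α i + β i)) + α i₀' + β i₀'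
          = 2 * (∑ i, (α i + β i)) - (α i₀' + β i₀') := by
      intro i₀'
      rw [Finset.filter_ne', Finset.sum_erase_eq_sub (Finset.mem_univ i₀')]
      ring
    rw [Finset.inf'_congr hne rfl (fun i _ => hfil i)]
    apply le_antisymm
    · apply Finset.le_inf'
      intro b _
      have := Finset.le_sup' (fun i => α i + β i) (Finset.mem_univ b)
      linarith [this]
    · calc Finset.univ.inf' hne (fun i₀' => 2 * (∑ i, (α i + β i)) - (α i₀' + β i₀'))
          ≤ 2 * (∑ i, (α i + β i)) - (α i₀ + β i₀) :=
            Finset.inf'_le _ (Finset.mem_univ i₀)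
        _ = _ := by rw [hi₀]
end
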